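/- For every ε > 0, m > 0, and each fixed μ ∈ ℤ₊, the series Σ_{λ=1}^∞ b₁(λ,μ,m,ε) converges to (−1)^(μ+1)·(1+√(m²ε²+1))/(mε), and the series Σ_{λ=1}^∞ b₂(λ,μ,m,ε) converges to (−1)^μ·(2+m²ε²+2√(m²ε²+1))/(m²ε²). -/

import Mathlib

noncomputable section

/-- The `i`-th move of a checker path encoded as `f : Fin n → Bool`
(`true` = upwards-right move `(ε,ε)`, `false` = upwards-left move `(−ε,ε)`);
out-of-range indices default to `true`. -/
def fcStep {n : ℕ} (f : Fin n → Bool) (i : ℕ) : Bool :=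
  if h : i < n then f ⟨i, h⟩ else true

/-- The number of turns of the checker path `f`. -/
def fcTurns {n : ℕ} (f : Fin n → Bool) : ℕ :=
  ((Finset.range (n - 1)).filter fun i => fcStep f i ≠ fcStep f (i + 1)).card

/-- The position (in units of `ε`) of the checker path `f` after `i` moves,
starting from the origin. -/
def fcPos {n : ℕ} (f : Fin n → Bool) (i : ℕ) : ℤ :=
  ∑ j ∈ Finset.range i, (if fcStep f j then (1 : ℤ) else -1)

/-- Checker paths from `(0,0)` to `(εx, εn)` whose first step is to `(ε,ε)`. -/
def fcPaths (n : ℕ) (x : ℤ) : Finset (Fin n → Bool) :=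
  Finset.univ.filter fun f =>
    (∀ i : Fin n, (i : ℕ) = 0 → f i = true) ∧ fcPos f n = x

/-- The amplitude `a(εx, εn, m, ε)`. -/
def fcAmp (m ε : ℝ) (x : ℤ) (n : ℕ) : ℂ :=
  (((1 + m ^ 2 * ε ^ 2) ^ ((1 - (n : ℝ)) / 2) : ℝ) : ℂ) * Complex.I *
    ∑ f ∈ fcPaths n x, (-Complex.I * (m * ε)) ^ fcTurns f

/-- The probability `P(εx, εn, m, ε)` to find the electron at `(εx, εn)`. -/
def fcP (m ε : ℝ) (x : ℤ) (n : ℕ) : ℝ := ‖fcAmp m ε x n‖ ^ 2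

/-- `b(λ,μ,m,ε) := a(ε(λ−μ), ε(λ+μ), m, ε)`. -/
def fcB (m ε : ℝ) (lam mu : ℕ) : ℂ := fcAmp m ε ((lam : ℤ) - (mu : ℤ)) (lam + mu)


/-!
Split every amplitude according to the direction of the last step of the paths. Removing that
step gives the Dirac equation of the checkers: in the light-cone coordinates `(λ, μ)` each part is
`q = (1 + m²ε²)^(-1/2)` times a combination of its two neighbours, the part that changes direction
picking up the turn factor `-imε`. Both parts vanish at `λ = 0`, since no path with first step to
the right reaches `x = -t`, and along `μ = 0` only the straight path contributes, a geometric
sequence in `q`. Since `q < 1`, the recursion in `λ` makes every row summable, and summing it over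
`λ` gives linear relations between the two row sums: the first is `ρ = -i(1 + √(m²ε² + 1))/(mε)`
times the second, and the second changes sign from one row to the next. At `μ = 1` the second row
sum is a geometric series, equal to `ρ`; hence row `μ` of `b` sums to `(-1)^(μ+1) i (ρ² + ρ)`.
-/

theorem summable_of_le_mul_add {u v : ℕ → ℝ} {q : ℝ} (hu : ∀ n, 0 ≤ u n) (hq₀ : 0 ≤ q)
    (hq : q < 1) (hv : Summable v) (hv₀ : ∀ n, 0 ≤ v n) (h : ∀ n, u (n + 1) ≤ q * u n + v n) :
    Summable u := by
  refine summable_of_sum_range_le hu (c := (u 0 + ∑' n, v n) / (1 - q)) fun N => ?_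
  have hmono : ∑ i ∈ Finset.range N, u i ≤ ∑ i ∈ Finset.range (N + 1), u i :=
    Finset.sum_le_sum_of_subset_of_nonneg (Finset.range_subset_range.2 N.le_succ)
      fun i _ _ => hu i
  have hstep : ∑ i ∈ Finset.range (N + 1), u i ≤
      q * ∑ i ∈ Finset.range (N + 1), u i + ∑' n, v n + u 0 :=
    calc ∑ i ∈ Finset.range (N + 1), u i
        = ∑ i ∈ Finset.range N, u (i + 1) + u 0 := Finset.sum_range_succ' u N
      _ ≤ ∑ i ∈ Finset.range N, (q * u i + v i) + u 0 := by gcongr with i; exact h i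
      _ = q * ∑ i ∈ Finset.range N, u i + ∑ i ∈ Finset.range N, v i + u 0 := by
        rw [Finset.sum_add_distrib, Finset.mul_sum]
      _ ≤ q * ∑ i ∈ Finset.range (N + 1), u i + ∑' n, v n + u 0 := by
        gcongr
        exact hv.sum_le_tsum _ fun i _ => hv₀ i
  rw [le_div_iff₀ (by linarith)]
  nlinarith

lemma fcStep_snoc {n : ℕ} (f : Fin n → Bool) (b : Bool) (j : ℕ) :
    fcStep (Fin.snoc f b : Fin (n + 1) → Bool) j = if j = n then b else fcStep f j := by
  rcases lt_trichotomy j n with h | rfl | h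
  · simp [fcStep, h, h.ne, Nat.lt_succ_of_lt h, Fin.snoc]
  · simp [fcStep, Fin.snoc]
  · simp [fcStep, h.ne', show ¬ j < n + 1 by omega, show ¬ j < n by omega]

lemma fcPos_snoc {n : ℕ} (f : Fin n → Bool) (b : Bool) :
    fcPos (Fin.snoc f b : Fin (n + 1) → Bool) (n + 1) = fcPos f n + if b then 1 else -1 := by
  rw [fcPos, Finset.sum_range_succ, fcStep_snoc, if_pos rfl, fcPos]
  congr 1
  refine Finset.sum_congr rfl fun j hj => ?_
  rw [fcStep_snoc, if_neg (Finset.mem_range.1 hj).ne]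

lemma fcTurns_snoc {n : ℕ} (f : Fin (n + 1) → Bool) (b : Bool) :
    fcTurns (Fin.snoc f b : Fin (n + 2) → Bool) =
      fcTurns f + if fcStep f n = b then 0 else 1 := by
  have hinner : ∀ i ∈ Finset.range n,
      (fcStep (Fin.snoc f b : Fin (n + 2) → Bool) i ≠
          fcStep (Fin.snoc f b : Fin (n + 2) → Bool) (i + 1) ↔
        fcStep f i ≠ fcStep f (i + 1)) := fun i hi => by
    rw [Finset.mem_range] at hi
    rw [fcStep_snoc, fcStep_snoc, if_neg (by omega), if_neg (by omega)]
  rw [fcTurns, fcTurns, Nat.add_sub_cancel, Nat.add_sub_cancel, Finset.range_add_one,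
    Finset.filter_insert, Finset.filter_congr hinner, fcStep_snoc, fcStep_snoc,
    if_neg (Nat.succ_ne_self n).symm, if_pos rfl]
  by_cases hb : fcStep f n = b
  · simp [hb]
  · rw [if_pos hb, if_neg hb, Finset.card_insert_of_notMem (by simp)]

lemma mem_fcPaths {n : ℕ} {x : ℤ} {f : Fin n → Bool} :
    f ∈ fcPaths n x ↔ (0 < n → fcStep f 0 = true) ∧ fcPos f n = x := by
  simp only [fcPaths, Finset.mem_filter, Finset.mem_univ, true_and]
  refine and_congr_left' ⟨fun h hn => ?_, fun h i hi => ?_⟩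
  · simpa [fcStep, hn] using h ⟨0, hn⟩ rfl
  · simpa [fcStep, i.isLt, ← hi] using h (by omega)

lemma snoc_mem_fcPaths {n : ℕ} (f : Fin (n + 1) → Bool) (b : Bool) (x : ℤ) :
    (Fin.snoc f b : Fin (n + 2) → Bool) ∈ fcPaths (n + 2) x ↔
      f ∈ fcPaths (n + 1) (x - if b then 1 else -1) := by
  rw [mem_fcPaths, mem_fcPaths, fcPos_snoc, fcStep_snoc, if_neg (Nat.succ_ne_zero n).symm]
  constructor <;> rintro ⟨h0, hx⟩ <;> exact ⟨fun _ => h0 (by omega), by omega⟩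

lemma fcStep_of_fcPos_eq_self {n : ℕ} {f : Fin n → Bool} (h : fcPos f n = n) {j : ℕ}
    (hj : j < n) : fcStep f j = true := by
  have hall := (Finset.sum_eq_sum_iff_of_le (s := Finset.range n) (g := fun _ => (1 : ℤ))
    fun j _ => show (if fcStep f j then (1 : ℤ) else -1) ≤ 1 by split <;> omega).1
    (by simpa [fcPos] using h)
  simpa using hall j (Finset.mem_range.2 hj)

lemma fcStep_of_fcPos_eq_neg_self {n : ℕ} {f : Fin n → Bool} (h : fcPos f n = -n) {j : ℕ}
    (hj : j < n) : fcStep f j = false := by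
  have hall := (Finset.sum_eq_sum_iff_of_le (s := Finset.range n) (f := fun _ => (-1 : ℤ))
    fun j _ => show -1 ≤ (if fcStep f j then (1 : ℤ) else -1) by split <;> omega).1
    (by simpa [fcPos] using h.symm)
  simpa using hall j (Finset.mem_range.2 hj)

lemma fcPaths_self (n : ℕ) : fcPaths n n = {fun _ => true} := by
  ext f
  rw [mem_fcPaths, Finset.mem_singleton]
  constructor
  · rintro ⟨-, hpos⟩
    funext i
    simpa [fcStep, i.isLt] using fcStep_of_fcPos_eq_self hpos i.isLt
  · rintro rfl
    simp [fcStep, fcPos]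

lemma fcPaths_neg_self {n : ℕ} (hn : 0 < n) : fcPaths n (-n) = ∅ := by
  refine Finset.eq_empty_of_forall_notMem fun f hf => ?_
  rw [mem_fcPaths] at hf
  simpa [hf.1 hn] using fcStep_of_fcPos_eq_neg_self hf.2 hn

section PathSums

variable {R : Type*} [CommSemiring R]

/-- For `n = 0` the empty path counts as ending with a `true` step, the default of `fcStep`. -/
def fcLastSum (z : R) (n : ℕ) (x : ℤ) (b : Bool) : R :=
  ∑ f ∈ (fcPaths n x).filter (fun f => fcStep f (n - 1) = b), z ^ fcTurns f

lemma sum_fcPaths_eq_fcLastSum (z : R) (n : ℕ) (x : ℤ) :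
    ∑ f ∈ fcPaths n x, z ^ fcTurns f = fcLastSum z n x true + fcLastSum z n x false := by
  simp only [fcLastSum, Bool.eq_false_iff, ne_eq]
  exact (Finset.sum_filter_add_sum_filter_not _ _ _).symm

lemma fcLastSum_succ (z : R) (n : ℕ) (x : ℤ) (b : Bool) :
    fcLastSum z (n + 2) x b =
      fcLastSum z (n + 1) (x - if b then 1 else -1) b +
        z * fcLastSum z (n + 1) (x - if b then 1 else -1) (!b) := by
  set x' := x - if b then 1 else -1
  have hinit : ∀ g ∈ (fcPaths (n + 2) x).filter (fun g => fcStep g (n + 2 - 1) = b),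
      (Fin.snoc (Fin.init g) b : Fin (n + 2) → Bool) = g := fun g hg => by
    have hlast : g (Fin.last (n + 1)) = b := by
      simpa [fcStep, Fin.last] using (Finset.mem_filter.1 hg).2
    rw [← hlast, Fin.snoc_init_self]
  have hsnoc : fcLastSum z (n + 2) x b =
      ∑ f ∈ fcPaths (n + 1) x', z ^ (fcTurns f + if fcStep f n = b then 0 else 1) := by
    refine Finset.sum_nbij' Fin.init (fun f => Fin.snoc f b) (fun g hg => ?_) (fun f hf => ?_)
      hinit (fun f _ => Fin.init_snoc _ _) (fun g hg => ?_)
    · rw [← snoc_mem_fcPaths, hinit g hg]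
      exact (Finset.mem_filter.1 hg).1
    · simpa [fcStep_snoc, snoc_mem_fcPaths] using hf
    · rw [← fcTurns_snoc, hinit g hg]
  rw [hsnoc, ← Finset.sum_filter_add_sum_filter_not _ (fun f => fcStep f n = b), fcLastSum,
    fcLastSum, Finset.mul_sum]
  congr 1
  · refine Finset.sum_congr rfl fun f hf => ?_
    rw [if_pos (by simpa using (Finset.mem_filter.1 hf).2), add_zero]
  · refine Finset.sum_congr (by ext f; cases b <;> simp) fun f hf => ?_
    rw [if_neg (by cases b <;> simpa using (Finset.mem_filter.1 hf).2), pow_succ, mul_comm]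

lemma fcLastSum_self_true (z : R) (n : ℕ) : fcLastSum z n n true = 1 := by
  simp [fcLastSum, fcPaths_self, Finset.filter_singleton, fcStep, fcTurns]

lemma fcLastSum_self_false (z : R) (n : ℕ) : fcLastSum z n n false = 0 := by
  simp [fcLastSum, fcPaths_self, Finset.filter_singleton, fcStep]

lemma fcLastSum_neg_self (z : R) {n : ℕ} (hn : 0 < n) (b : Bool) : fcLastSum z n (-n) b = 0 := by
  simp [fcLastSum, fcPaths_neg_self hn]

end PathSums

section Amplitudes

variable (m ε : ℝ)

def fcNorm (n : ℕ) : ℝ := (1 + m ^ 2 * ε ^ 2) ^ ((1 - (n : ℝ)) / 2)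

def fcDecay : ℝ := (√(m ^ 2 * ε ^ 2 + 1))⁻¹

def fcAmpLast (x : ℤ) (n : ℕ) (b : Bool) : ℂ :=
  (fcNorm m ε n : ℂ) * fcLastSum (-Complex.I * (m * ε)) n x b

lemma fcNorm_succ (n : ℕ) : fcNorm m ε (n + 1) = fcNorm m ε n * fcDecay m ε := by
  rw [fcNorm, fcNorm, fcDecay, Real.sqrt_eq_rpow, ← Real.rpow_neg (by positivity), add_comm,
    ← Real.rpow_add (by positivity)]
  congr 1
  push_cast
  ring

lemma fcNorm_succ_eq_pow (k : ℕ) : fcNorm m ε (k + 1) = fcDecay m ε ^ k := by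
  induction k with
  | zero => simp [fcNorm]
  | succ k ih => rw [fcNorm_succ, ih, pow_succ]

lemma fcAmp_eq_add (x : ℤ) (n : ℕ) :
    fcAmp m ε x n = Complex.I * (fcAmpLast m ε x n true + fcAmpLast m ε x n false) := by
  rw [fcAmp, sum_fcPaths_eq_fcLastSum, fcAmpLast, fcAmpLast, fcNorm]
  ring

lemma fcAmpLast_succ (n : ℕ) (x : ℤ) (b : Bool) :
    fcAmpLast m ε x (n + 2) b =
      fcDecay m ε * (fcAmpLast m ε (x - if b then 1 else -1) (n + 1) b +
        -Complex.I * (m * ε) * fcAmpLast m ε (x - if b then 1 else -1) (n + 1) (!b)) := by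
  rw [fcAmpLast, fcNorm_succ, fcLastSum_succ, fcAmpLast, fcAmpLast]
  push_cast
  ring

lemma fcAmpLast_neg_self {n : ℕ} (hn : 0 < n) (b : Bool) : fcAmpLast m ε (-n) n b = 0 := by
  rw [fcAmpLast, fcLastSum_neg_self _ hn, mul_zero]

lemma fcAmpLast_succ_self_true (k : ℕ) :
    fcAmpLast m ε (k + 1 : ℕ) (k + 1) true = fcDecay m ε ^ k := by
  rw [fcAmpLast, fcLastSum_self_true, fcNorm_succ_eq_pow]
  push_cast
  ring

lemma fcAmpLast_self_false (n : ℕ) : fcAmpLast m ε n n false = 0 := by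
  rw [fcAmpLast, fcLastSum_self_false, mul_zero]

end Amplitudes

section LightCone

variable (m ε : ℝ)

def fcBLast (lam mu : ℕ) (b : Bool) : ℂ := fcAmpLast m ε ((lam : ℤ) - (mu : ℤ)) (lam + mu) b

lemma fcB_eq_add (lam mu : ℕ) :
    fcB m ε lam mu = Complex.I * (fcBLast m ε lam mu true + fcBLast m ε lam mu false) :=
  fcAmp_eq_add m ε _ _

lemma fcBLast_true_succ_left {lam mu : ℕ} (h : 0 < lam + mu) :
    fcBLast m ε (lam + 1) mu true = fcDecay m ε *
      (fcBLast m ε lam mu true + -Complex.I * (m * ε) * fcBLast m ε lam mu false) := by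
  obtain ⟨n, hn⟩ := Nat.exists_eq_add_of_lt h
  rw [fcBLast, show lam + 1 + mu = n + 2 by omega, fcAmpLast_succ, if_pos rfl, Bool.not_true,
    show ((lam + 1 : ℕ) : ℤ) - mu - 1 = lam - mu by push_cast; ring, fcBLast, fcBLast,
    show lam + mu = n + 1 by omega]

lemma fcBLast_false_succ_right {lam mu : ℕ} (h : 0 < lam + mu) :
    fcBLast m ε lam (mu + 1) false = fcDecay m ε *
      (fcBLast m ε lam mu false + -Complex.I * (m * ε) * fcBLast m ε lam mu true) := by
  obtain ⟨n, hn⟩ := Nat.exists_eq_add_of_lt h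
  rw [fcBLast, show lam + (mu + 1) = n + 2 by omega, fcAmpLast_succ, if_neg Bool.false_ne_true,
    Bool.not_false, show (lam : ℤ) - ((mu + 1 : ℕ) : ℤ) - -1 = lam - mu by push_cast; ring,
    fcBLast, fcBLast, show lam + mu = n + 1 by omega]

lemma fcBLast_zero_left {mu : ℕ} (hmu : 0 < mu) (b : Bool) : fcBLast m ε 0 mu b = 0 := by
  simpa [fcBLast] using fcAmpLast_neg_self m ε hmu b

lemma fcBLast_true_succ_zero (k : ℕ) : fcBLast m ε (k + 1) 0 true = fcDecay m ε ^ k := by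
  simpa [fcBLast] using fcAmpLast_succ_self_true m ε k

lemma fcBLast_false_zero_right (lam : ℕ) : fcBLast m ε lam 0 false = 0 := by
  simpa [fcBLast] using fcAmpLast_self_false m ε lam

end LightCone

section Series

variable {m ε : ℝ}

lemma one_lt_sqrt_sq_mul_sq_add_one (hmε : m * ε ≠ 0) : 1 < √(m ^ 2 * ε ^ 2 + 1) := by
  rw [Real.lt_sqrt zero_le_one, one_pow, ← mul_pow]
  have := pow_pos (abs_pos.2 hmε) 2
  rw [sq_abs] at this
  linarith

lemma sq_sqrt_sq_mul_sq_add_one (m ε : ℝ) : √(m ^ 2 * ε ^ 2 + 1) ^ 2 = (m * ε) ^ 2 + 1 := by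
  rw [Real.sq_sqrt (by positivity)]
  ring

lemma fcDecay_nonneg : 0 ≤ fcDecay m ε := inv_nonneg.2 (Real.sqrt_nonneg _)

lemma fcDecay_lt_one (hmε : m * ε ≠ 0) : fcDecay m ε < 1 :=
  inv_lt_one_of_one_lt₀ (one_lt_sqrt_sq_mul_sq_add_one hmε)

lemma norm_fcDecay_lt_one (hmε : m * ε ≠ 0) : ‖(fcDecay m ε : ℂ)‖ < 1 := by
  rw [Complex.norm_real, Real.norm_of_nonneg fcDecay_nonneg]
  exact fcDecay_lt_one hmε

lemma one_sub_fcDecay_ne_zero (hmε : m * ε ≠ 0) : 1 - (fcDecay m ε : ℂ) ≠ 0 := by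
  exact_mod_cast (sub_pos.2 (fcDecay_lt_one hmε)).ne'

lemma summable_fcBLast (hmε : m * ε ≠ 0) (mu : ℕ) :
    Summable (fcBLast m ε · mu true) ∧ Summable (fcBLast m ε · mu false) := by
  induction mu with
  | zero =>
    refine ⟨(summable_nat_add_iff 1).1 ?_, ?_⟩
    · simp_rw [fcBLast_true_succ_zero]
      exact summable_geometric_of_norm_lt_one (norm_fcDecay_lt_one hmε)
    · simp_rw [fcBLast_false_zero_right]
      exact summable_zero
  | succ mu ih =>
    obtain ⟨hT, hF⟩ := ih
    have hF' : Summable (fcBLast m ε · (mu + 1) false) := by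
      refine (summable_nat_add_iff 1).1 <| (((summable_nat_add_iff 1).2 hF).add
        (((summable_nat_add_iff 1).2 hT).mul_left (-Complex.I * (m * ε)))).mul_left
          (fcDecay m ε : ℂ) |>.congr fun n => ?_
      exact (fcBLast_false_succ_right m ε (by omega)).symm
    refine ⟨summable_norm_iff.1 (summable_of_le_mul_add (fun _ => norm_nonneg _) (norm_nonneg _)
      (norm_fcDecay_lt_one hmε) ((summable_norm_iff.2 hF').mul_left
        (‖(fcDecay m ε : ℂ)‖ * ‖-Complex.I * (m * ε)‖)) (fun _ => by positivity) fun n => ?_), hF'⟩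
    calc ‖fcBLast m ε (n + 1) (mu + 1) true‖
        ≤ ‖(fcDecay m ε : ℂ)‖ * (‖fcBLast m ε n (mu + 1) true‖ +
            ‖-Complex.I * (m * ε) * fcBLast m ε n (mu + 1) false‖) := by
          rw [fcBLast_true_succ_left m ε (by omega), norm_mul]
          gcongr
          exact norm_add_le _ _
      _ = _ := by rw [norm_mul]; ring

def fcBLastSum (m ε : ℝ) (mu : ℕ) (b : Bool) : ℂ := ∑' lam, fcBLast m ε lam mu b

lemma fcBLastSum_true_eq_fcDecay_mul (hmε : m * ε ≠ 0) {mu : ℕ} (hmu : 0 < mu) :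
    fcBLastSum m ε mu true = fcDecay m ε *
      (fcBLastSum m ε mu true + -Complex.I * (m * ε) * fcBLastSum m ε mu false) := by
  obtain ⟨hT, hF⟩ := summable_fcBLast hmε mu
  calc fcBLastSum m ε mu true = ∑' lam, fcBLast m ε (lam + 1) mu true := by
        rw [fcBLastSum, hT.tsum_eq_zero_add, fcBLast_zero_left m ε hmu, zero_add]
    _ = _ := by
        rw [tsum_congr fun lam => fcBLast_true_succ_left m ε (by omega), tsum_mul_left,
          hT.tsum_add (hF.mul_left _), tsum_mul_left, fcBLastSum, fcBLastSum]

lemma fcBLastSum_false_succ (hmε : m * ε ≠ 0) {mu : ℕ} (hmu : 0 < mu) :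
    fcBLastSum m ε (mu + 1) false = fcDecay m ε *
      (fcBLastSum m ε mu false + -Complex.I * (m * ε) * fcBLastSum m ε mu true) := by
  obtain ⟨hT, hF⟩ := summable_fcBLast hmε mu
  rw [fcBLastSum, tsum_congr fun lam => fcBLast_false_succ_right m ε (by omega), tsum_mul_left,
    hF.tsum_add (hT.mul_left _), tsum_mul_left, fcBLastSum, fcBLastSum]

lemma fcBLastSum_false_one (hmε : m * ε ≠ 0) :
    fcBLastSum m ε 1 false =
      fcDecay m ε * (-Complex.I * (m * ε)) * (1 - (fcDecay m ε : ℂ))⁻¹ := by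
  have hF := (summable_fcBLast hmε 1).2
  rw [fcBLastSum, hF.tsum_eq_zero_add, fcBLast_zero_left m ε one_pos, zero_add,
    tsum_congr fun lam => fcBLast_false_succ_right m ε (by omega)]
  simp_rw [fcBLast_false_zero_right, fcBLast_true_succ_zero, zero_add]
  rw [tsum_mul_left, tsum_mul_left, tsum_geometric_of_norm_lt_one (norm_fcDecay_lt_one hmε)]
  ring

def fcRatio (m ε : ℝ) : ℝ := (1 + √(m ^ 2 * ε ^ 2 + 1)) / (m * ε)

lemma fcDecay_mul_turn (hmε : m * ε ≠ 0) :
    (fcDecay m ε : ℂ) * (-Complex.I * (m * ε)) =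
      -Complex.I * fcRatio m ε * (1 - (fcDecay m ε : ℂ)) := by
  have hs : (√(m ^ 2 * ε ^ 2 + 1) : ℂ) ^ 2 = (m * ε) ^ 2 + 1 := by
    exact_mod_cast sq_sqrt_sq_mul_sq_add_one m ε
  have hs₀ : (√(m ^ 2 * ε ^ 2 + 1) : ℂ) ≠ 0 := Complex.ofReal_ne_zero.2 (by positivity)
  have hm : (m : ℂ) ≠ 0 := Complex.ofReal_ne_zero.2 (left_ne_zero_of_mul hmε)
  have hε : (ε : ℂ) ≠ 0 := Complex.ofReal_ne_zero.2 (right_ne_zero_of_mul hmε)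
  rw [fcDecay, fcRatio]
  push_cast
  field_simp
  linear_combination hs

lemma fcDecay_mul_one_add_turn_mul_ratio (hmε : m * ε ≠ 0) :
    (fcDecay m ε : ℂ) * (1 + -Complex.I * (m * ε) * (-Complex.I * fcRatio m ε)) = -1 := by
  have hs₀ : (√(m ^ 2 * ε ^ 2 + 1) : ℂ) ≠ 0 := Complex.ofReal_ne_zero.2 (by positivity)
  have hm : (m : ℂ) ≠ 0 := Complex.ofReal_ne_zero.2 (left_ne_zero_of_mul hmε)
  have hε : (ε : ℂ) ≠ 0 := Complex.ofReal_ne_zero.2 (right_ne_zero_of_mul hmε)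
  rw [fcDecay, fcRatio]
  push_cast
  field_simp
  linear_combination (√(m ^ 2 * ε ^ 2 + 1) + 1 : ℂ) * Complex.I_sq

lemma fcBLastSum_true_eq_ratio_mul (hmε : m * ε ≠ 0) {mu : ℕ} (hmu : 0 < mu) :
    fcBLastSum m ε mu true = -Complex.I * fcRatio m ε * fcBLastSum m ε mu false := by
  apply mul_right_cancel₀ (one_sub_fcDecay_ne_zero hmε)
  linear_combination fcBLastSum_true_eq_fcDecay_mul hmε hmu +
    fcBLastSum m ε mu false * fcDecay_mul_turn hmε

lemma fcBLastSum_false_eq (hmε : m * ε ≠ 0) {mu : ℕ} (hmu : 0 < mu) :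
    fcBLastSum m ε mu false = (-1) ^ (mu + 1) * (-Complex.I * fcRatio m ε) := by
  induction mu, hmu using Nat.le_induction with
  | base =>
    rw [fcBLastSum_false_one hmε, fcDecay_mul_turn hmε, mul_assoc,
      mul_inv_cancel₀ (one_sub_fcDecay_ne_zero hmε)]
    ring
  | succ mu hmu ih =>
    rw [fcBLastSum_false_succ hmε hmu, fcBLastSum_true_eq_ratio_mul hmε hmu, ih]
    linear_combination (-1) ^ (mu + 1) * (-Complex.I * fcRatio m ε) *
      fcDecay_mul_one_add_turn_mul_ratio hmε

lemma fcB_zero_left {mu : ℕ} (hmu : 0 < mu) : fcB m ε 0 mu = 0 := by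
  rw [fcB_eq_add, fcBLast_zero_left m ε hmu, fcBLast_zero_left m ε hmu, add_zero, mul_zero]

theorem hasSum_fcB (hmε : m * ε ≠ 0) {mu : ℕ} (hmu : 0 < mu) :
    HasSum (fun lam => fcB m ε lam mu)
      ⟨(-1) ^ (mu + 1) * fcRatio m ε, (-1) ^ mu * fcRatio m ε ^ 2⟩ := by
  obtain ⟨hT, hF⟩ := summable_fcBLast hmε mu
  have h : HasSum (fun lam => fcB m ε lam mu)
      (Complex.I * (fcBLastSum m ε mu true + fcBLastSum m ε mu false)) := by
    simpa only [fcB_eq_add, fcBLastSum] using (hT.hasSum.add hF.hasSum).mul_left Complex.I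
  convert h using 1
  rw [fcBLastSum_true_eq_ratio_mul hmε hmu, fcBLastSum_false_eq hmε hmu, Complex.mk_eq_add_mul_I]
  push_cast
  linear_combination
    ((-1) ^ (mu + 1) * fcRatio m ε + (-1) ^ mu * fcRatio m ε ^ 2 * Complex.I : ℂ) * Complex.I_sq

end Series

/-- For fixed `μ ∈ ℤ₊`, the series `Σ_{λ=1}^∞ b₁(λ,μ,m,ε)` and `Σ_{λ=1}^∞ b₂(λ,μ,m,ε)`
converge to `(−1)^(μ+1)(1+√(m²ε²+1))/(mε)` and `(−1)^μ(2+m²ε²+2√(m²ε²+1))/(m²ε²)`. -/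
theorem stmt6 (m ε : ℝ) (hε : 0 < ε) (hm : 0 < m) (mu : ℕ) (hmu : 1 ≤ mu) :
    HasSum (fun k : ℕ => (fcB m ε (k + 1) mu).re)
      ((-1 : ℝ) ^ (mu + 1) * ((1 + Real.sqrt (m ^ 2 * ε ^ 2 + 1)) / (m * ε))) ∧
    HasSum (fun k : ℕ => (fcB m ε (k + 1) mu).im)
      ((-1 : ℝ) ^ mu * ((2 + m ^ 2 * ε ^ 2 + 2 * Real.sqrt (m ^ 2 * ε ^ 2 + 1))
          / (m ^ 2 * ε ^ 2))) := by
  have hmε : m * ε ≠ 0 := (mul_pos hm hε).ne'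
  have hB := (hasSum_nat_add_iff' 1).2 (hasSum_fcB hmε hmu)
  simp only [Finset.sum_range_one, fcB_zero_left hmu, sub_zero] at hB
  have hsq : fcRatio m ε ^ 2 =
      (2 + m ^ 2 * ε ^ 2 + 2 * √(m ^ 2 * ε ^ 2 + 1)) / (m ^ 2 * ε ^ 2) := by
    rw [fcRatio, div_pow, add_sq, sq_sqrt_sq_mul_sq_add_one]
    ring
  rw [← hsq]
  exact (Complex.hasSum_iff _ _).1 hB
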